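/- arXiv:1903.06553 — 2 statements merged into one kernel-verified Lean document; each statement's English description precedes it below -/
import Mathlib

section
/- Let (Ξ, T) be an admissible pair with F_h of order k and k_1,…,k_p, l ∈ ℕ, and let K_1,…,K_p ∈ C^(d) be fixed. If some m ∈ {1,…,l} satisfies L_m ∉ ∪_{i=1}^p B(K_i, 2r) (balls in the Hausdorff metric), then D^l_{L_1,…,L_l} ψ^!_{k_1,…,k_p}(K_1,…,K_p; ξ) = 0 for every configuration ξ ∈ N. -/
open MeasureTheory Metric Filter Topology
open scoped ENNReal NNReal Classical

noncomputable section

/-- Points of `ℝ^d`. -/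
abbrev EuclidPt (d : ℕ) : Type := EuclideanSpace ℝ (Fin d)

/-- The space `C^(d)` of nonempty compact subsets of `ℝ^d`, with the Hausdorff metric. -/
abbrev Particle (d : ℕ) : Type := TopologicalSpace.NonemptyCompacts (EuclidPt d)

instance particleMeasurableSpace (d : ℕ) : MeasurableSpace (Particle d) := borel _
instance particleBorelSpace (d : ℕ) : BorelSpace (Particle d) := ⟨rfl⟩

/-- The space `N` of (counting) measures on `C^(d)`, i.e. configurations of particles. -/
abbrev Config (d : ℕ) : Type := MeasureTheory.Measure (Particle d)

namespace GibbsParticle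

variable {d : ℕ}

/-- Translation `K + x` of a particle. -/
def translate (K : Particle d) (x : EuclidPt d) : Particle d :=
  ⟨⟨(fun y => y + x) '' (K : Set (EuclidPt d)),
      K.isCompact.image (continuous_id.add continuous_const)⟩,
    K.nonempty.image _⟩

/-- `x` is the centre of the circumscribed ball of the particle `K`. -/
def IsCircumcenter (K : Particle d) (x : EuclidPt d) : Prop :=
  ∃ r : ℝ, 0 ≤ r ∧ (K : Set (EuclidPt d)) ⊆ closedBall x r ∧
    ∀ (y : EuclidPt d) (r' : ℝ), (K : Set (EuclidPt d)) ⊆ closedBall y r' → r ≤ r'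

/-- The centre `z(K)` of the circumscribed ball of the particle `K`. -/
def center (K : Particle d) : EuclidPt d := Classical.epsilon (IsCircumcenter K)

/-- `B_b(C^(d))`: sets of particles of the form `z⁻¹(B)` with `B ⊆ ℝ^d` bounded Borel. -/
def BoundedDomain (d : ℕ) (Ψ : Set (Particle d)) : Prop :=
  MeasurableSet Ψ ∧ ∃ B : Set (EuclidPt d), MeasurableSet B ∧ Bornology.IsBounded B ∧
    Ψ = center ⁻¹' B

/-- The `m`-th factorial measure `ξ^{(m)}` of a (simple) configuration `ξ`:
the restriction of the `m`-fold product to tuples with pairwise distinct entries. -/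
def factorialMeasure (m : ℕ) (ξ : Config d) : Measure (Fin m → Particle d) :=
  (Measure.pi fun _ => ξ).restrict {K | Function.Injective K}

/-- The translation invariant measure `μ = ∫∫ 1{K + x ∈ ·} Q(dK) dx` on particles. -/
def muMeas (d : ℕ) (Q : Measure (Particle d)) : Measure (Particle d) :=
  (volume : Measure (EuclidPt d)).bind fun x => Q.map fun K => translate K x

/-- `P` is the distribution of a Poisson particle process with intensity measure `ν`,
characterized by the Mecke equation. -/
def IsPoissonPP (ν : Measure (Particle d)) (P : Measure (Config d)) : Prop :=
  IsProbabilityMeasure P ∧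
    ∀ f : Particle d → Config d → ℝ≥0∞, Measurable (Function.uncurry f) →
      ∫⁻ ξ, ∫⁻ K, f K ξ ∂ξ ∂P = ∫⁻ K, ∫⁻ ξ, f K (ξ + Measure.dirac K) ∂P ∂ν

/-- `P` is the distribution of a Gibbs particle process with Papangelou intensity `κ`
and activity `lam`, w.r.t. the reference measure `μ`, characterized by the GNZ equation. -/
def IsGibbs (μ : Measure (Particle d)) (κ : Particle d → Config d → ℝ≥0∞)
    (lam : ℝ) (P : Measure (Config d)) : Prop :=
  IsProbabilityMeasure P ∧
    ∀ f : Particle d → Config d → ℝ≥0∞, Measurable (Function.uncurry f) →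
      ∫⁻ ξ, ∫⁻ K, f K (ξ - Measure.dirac K) ∂ξ ∂P
        = ENNReal.ofReal lam * ∫⁻ ξ, ∫⁻ K, f K ξ * κ K ξ ∂μ ∂P

/-- The `m`-th factorial moment measure `α^{(m)} = E[Ξ^{(m)}]` of a particle process with
distribution `P`. -/
def factMomentMeasure (P : Measure (Config d)) (m : ℕ) : Measure (Fin m → Particle d) :=
  P.bind (factorialMeasure m)

/-- `Palm` is a family of `p`-th order Palm distributions of the particle process with
distribution `P`. -/
def IsPalm (P : Measure (Config d)) (p : ℕ)
    (Palm : (Fin p → Particle d) → Measure (Config d)) : Prop :=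
  ∀ f : (Fin p → Particle d) → Config d → ℝ≥0∞, Measurable (Function.uncurry f) →
    ∫⁻ ξ, ∫⁻ K, f K ξ ∂(factorialMeasure p ξ) ∂P
      = ∫⁻ K, ∫⁻ ξ, f K ξ ∂(Palm K) ∂(factMomentMeasure P p)

/-- The reduced Palm distribution obtained from the Palm distribution by removing
the points `K 1, …, K p`. -/
def reducedPalm (p : ℕ) (Palm : (Fin p → Particle d) → Measure (Config d))
    (K : Fin p → Particle d) : Measure (Config d) :=
  (Palm K).map fun ξ => ξ - ∑ i, Measure.dirac (K i)

/-- An increasing event of configurations. -/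
def IncreasingEvent (E : Set (Config d)) : Prop :=
  ∀ ξ ξ' : Config d, ξ ∈ E → ξ ≤ ξ' → ξ' ∈ E

/-- Stochastic domination of particle processes. -/
def StochDom (P P' : Measure (Config d)) : Prop :=
  ∀ E : Set (Config d), MeasurableSet E → IncreasingEvent E → P E ≤ P' E

/-- The distance `d(Ψ, Γ) = inf {d_H(A,B) : A ∈ Ψ, B ∈ Γ}` between two sets of particles. -/
def setDist (Ψ Γ : Set (Particle d)) : ℝ :=
  ⨅ (A : Ψ) (B : Γ), dist (A : Particle d) (B : Particle d)

/-- `ξ` connects `Ψ` and `Γ`: there are `K ∈ Ψ` and `L ∈ Γ` joined by a finite path of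
pairwise intersecting particles of `ξ + δ_K + δ_L`. -/
def Connects (ξ : Config d) (Ψ Γ : Set (Particle d)) : Prop :=
  ∃ K ∈ Ψ, ∃ L ∈ Γ, ∃ n : ℕ, ∃ c : Fin (n + 1) → Particle d,
    c 0 = K ∧ c (Fin.last n) = L ∧
    (∀ i, (ξ + Measure.dirac K + Measure.dirac L) {c i} ≠ 0) ∧
    ∀ i : Fin n, ((c i.castSucc : Set (EuclidPt d)) ∩ (c i.succ : Set (EuclidPt d))).Nonempty

/-- `ξ` percolates: its intersection graph has an infinite connected component. -/
def Percolates (ξ : Config d) : Prop :=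
  ∃ S : Set (Particle d), S.Infinite ∧ (∀ K ∈ S, ξ {K} ≠ 0) ∧
    ∀ K ∈ S, ∀ L ∈ S, K ≠ L → Connects ξ {K} {L}

/-- The critical activity `λ_c(d, Q)` for percolation of the Poisson particle process. -/
def percThreshold (d : ℕ) (Q : Measure (Particle d)) : ℝ :=
  sSup {lam : ℝ | 0 ≤ lam ∧
    ∀ P : Measure (Config d), IsPoissonPP (ENNReal.ofReal lam • muMeas d Q) P →
      P {ξ | Percolates ξ} = 0}

/-- The positive part of an extended real, as an extended nonnegative real. -/
def erealPos (x : EReal) : ℝ≥0∞ := if x = ⊤ then ⊤ else ENNReal.ofReal x.toReal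

/-- A family of measurable, symmetric, translation invariant higher-order interaction
potentials with finite interaction range. -/
structure Potentials (d : ℕ) where
  φ : (n : ℕ) → (Fin n → Particle d) → EReal
  meas : ∀ n, Measurable (φ n)
  symm : ∀ n (σ : Equiv.Perm (Fin n)) (K : Fin n → Particle d), φ n (K ∘ σ) = φ n K
  transInv : ∀ n (x : EuclidPt d) (K : Fin n → Particle d),
    φ n (fun i => translate (K i) x) = φ n K
  range : ℝ
  range_pos : 0 < range
  finiteRange : ∀ n (K : Fin n → Particle d),
    (∃ i j, range < dist (K i) (K j)) → φ n K = 0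

/-- The positive part of the defining series of the Hamiltonian of one particle. -/
def hamPos (V : Potentials d) (K : Particle d) (ξ : Config d) : ℝ≥0∞ :=
  ∑' m : ℕ, (((m + 1).factorial : ℝ≥0∞))⁻¹ *
    ∫⁻ L, erealPos (V.φ (m + 2) (Fin.cons K L)) ∂(factorialMeasure (m + 1) ξ)

/-- The negative part of the defining series of the Hamiltonian of one particle. -/
def hamNeg (V : Potentials d) (K : Particle d) (ξ : Config d) : ℝ≥0∞ :=
  ∑' m : ℕ, (((m + 1).factorial : ℝ≥0∞))⁻¹ *
    ∫⁻ L, erealPos (-(V.φ (m + 2) (Fin.cons K L))) ∂(factorialMeasure (m + 1) ξ)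

/-- The Papangelou intensity determined by a family of potentials:
`κ(K,ξ) = exp(−Σ_{n≥2} (1/(n−1)!) ∫ φ_n(K, L_1, …, L_{n−1}) ξ^{(n−1)}(d(L_1,…,L_{n−1})))`
for `K ∉ supp ξ`, and `κ(K,ξ) = 0` otherwise; if the negative part of the series diverges,
the series is set to `0`. -/
def kappaOf (V : Potentials d) (K : Particle d) (ξ : Config d) : ℝ≥0∞ :=
  if ξ {K} ≠ 0 then 0
  else if hamNeg V K ξ = ⊤ then 1
  else if hamPos V K ξ = ⊤ then 0
  else ENNReal.ofReal (Real.exp ((hamNeg V K ξ).toReal - (hamPos V K ξ).toReal))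

/-- A particle distribution `Q`: a probability measure concentrated on particles centred
at the origin and contained in the ball `B(0,R)`. -/
structure ParticleLaw (d : ℕ) where
  Q : Measure (Particle d)
  prob : IsProbabilityMeasure Q
  R : ℝ
  R_pos : 0 < R
  centered : Q {K | center K = 0} = 1
  bounded : Q {K | (K : Set (EuclidPt d)) ⊆ closedBall (0 : EuclidPt d) R} = 1

/-- An admissible Gibbs particle process: deterministically bounded particles, Papangelou
intensity `κ ≤ 1` given by translation invariant potentials of finite range, and a
distribution `P` satisfying the GNZ equation. -/
structure AdmissibleGibbs (d : ℕ) where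
  law : ParticleLaw d
  V : Potentials d
  lam : ℝ
  lam_pos : 0 < lam
  kappa_le_one : ∀ K ξ, kappaOf V K ξ ≤ 1
  P : Measure (Config d)
  gibbs : IsGibbs (muMeas d law.Q) (kappaOf V) lam P

/-- The `p`-th order Papangelou intensity
`κ_p(K_1,…,K_p, ξ) = κ(K_1,ξ) κ(K_2, ξ+δ_{K_1}) ⋯ κ(K_p, ξ+δ_{K_1}+…+δ_{K_{p−1}})`. -/
def kappaChain (κ : Particle d → Config d → ℝ≥0∞) (p : ℕ)
    (K : Fin p → Particle d) (ξ : Config d) : ℝ≥0∞ :=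
  ∏ i : Fin p,
    κ (K i) (ξ + ∑ j ∈ Finset.univ.filter (fun j => j < i), Measure.dirac (K j))

/-- The `p`-th correlation function `ρ_p(K⃗) = λ^p E[κ_p(K⃗, Ξ)]`, with values in `ℝ≥0∞`. -/
def rhoE (κ : Particle d → Config d → ℝ≥0∞) (lam : ℝ) (P : Measure (Config d))
    (p : ℕ) (K : Fin p → Particle d) : ℝ≥0∞ :=
  ENNReal.ofReal lam ^ p * ∫⁻ ξ, kappaChain κ p K ξ ∂P

/-- The `p`-th correlation function, real-valued. -/
def rho (κ : Particle d → Config d → ℝ≥0∞) (lam : ℝ) (P : Measure (Config d))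
    (p : ℕ) (K : Fin p → Particle d) : ℝ :=
  (rhoE κ lam P p K).toReal

/-- The exponential-decay estimate for connection probabilities of the subcritical
Boolean model, with constants `C₁` (monotone decreasing) and `C₂ > 0`. -/
def DecayEstimate (d : ℕ) (Q : Measure (Particle d)) (lam : ℝ) (C₁ : ℝ → ℝ) (C₂ : ℝ) : Prop :=
  (∀ x, 0 ≤ C₁ x) ∧ AntitoneOn C₁ (Set.Ici 0) ∧ 0 < C₂ ∧
    ∀ Ψ Γ : Set (Particle d), BoundedDomain d Ψ → BoundedDomain d Γ → Ψ ⊆ Γ →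
      ∀ Ppois : Measure (Config d), IsPoissonPP (ENNReal.ofReal lam • muMeas d Q) Ppois →
        Ppois {ξ | Connects ξ Ψ Γᶜ}
          ≤ ENNReal.ofReal (C₁ (Metric.diam Ψ) * Real.exp (-C₂ * setDist Ψ Γᶜ))

/-- A measurable, symmetric, translation invariant function `h` of `k` particles, of finite
interaction radius `r` and bounded, determining an admissible `U`-statistic of order `k`. -/
structure AdmissibleFun (d k : ℕ) [NeZero k] where
  h : (Fin k → Particle d) → ℝ
  meas : Measurable h
  symm : ∀ (σ : Equiv.Perm (Fin k)) (K : Fin k → Particle d), h (K ∘ σ) = h K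
  transInv : ∀ (x : EuclidPt d) (K : Fin k → Particle d),
    h (fun i => translate (K i) x) = h K
  r : ℝ
  r_pos : 0 < r
  vanish_far : ∀ K : Fin k → Particle d,
    (∃ i : Fin k, i ≠ 0 ∧ r < dist (K i) (K 0)) → h K = 0
  vanish_eq : ∀ K : Fin k → Particle d, (∃ i : Fin k, i ≠ 0 ∧ K i = K 0) → h K = 0
  bdd : ∃ M : ℝ, ∀ K, |h K| ≤ M

/-- The sup-norm `‖h‖_∞` of an admissible function. -/
def hNorm {k : ℕ} [NeZero k] (A : AdmissibleFun d k) : ℝ := ⨆ K, |A.h K|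

/-- Prepend a particle to a `(k−1)`-tuple of particles, giving a `k`-tuple. -/
def consP {k : ℕ} [NeZero k] (K : Particle d) (L : Fin (k - 1) → Particle d) :
    Fin k → Particle d :=
  fun i => Fin.cons (α := fun _ => Particle d) K L
    (Fin.cast (Nat.succ_pred_eq_of_pos (Nat.pos_of_ne_zero (NeZero.ne k))).symm i)

/-- The score function `T(K, ξ) = (1/k!) ∫ h(K, K_2, …, K_k) ξ^{(k−1)}(d(K_2,…,K_k))`. -/
def score {k : ℕ} [NeZero k] (A : AdmissibleFun d k) (K : Particle d) (ξ : Config d) : ℝ :=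
  (k.factorial : ℝ)⁻¹ * ∫ L, A.h (consP K L) ∂(factorialMeasure (k - 1) ξ)

/-- The `U`-statistic `F_h(ξ) = (1/k!) ∫ h(K_1,…,K_k) ξ^{(k)}(d(K_1,…,K_k))`. -/
def Ustat {k : ℕ} [NeZero k] (A : AdmissibleFun d k) (ξ : Config d) : ℝ :=
  (k.factorial : ℝ)⁻¹ * ∫ K, A.h K ∂(factorialMeasure k ξ)

/-- The window `W_n = [−n^{1/d}/2, n^{1/d}/2]^d`. -/
def window (d n : ℕ) : Set (EuclidPt d) :=
  {x | ∀ i, |x i| ≤ (n : ℝ) ^ ((1 : ℝ) / (d : ℝ)) / 2}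

/-- The restriction `ξ_n` of a configuration to particles centred in `W_n`. -/
def restrictWin (n : ℕ) (ξ : Config d) : Config d :=
  ξ.restrict (center ⁻¹' window d n)

/-- The weighted mixed moment
`m^{(k_1,…,k_p)}(K⃗; n) = ρ_p(K⃗) ∫ T(K_1, ξ_n)^{k_1} ⋯ T(K_p, ξ_n)^{k_p} P_{K⃗}(dξ)`. -/
def mixedMoment {k : ℕ} [NeZero k] (A : AdmissibleFun d k)
    (κ : Particle d → Config d → ℝ≥0∞) (lam : ℝ) (P : Measure (Config d))
    {p : ℕ} (Palm : (Fin p → Particle d) → Measure (Config d))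
    (kk : Fin p → ℕ) (n : ℕ) (K : Fin p → Particle d) : ℝ :=
  rho κ lam P p K * ∫ ξ, ∏ i, score A (K i) (restrictWin n ξ) ^ (kk i) ∂(Palm K)

/-- The difference operator
`D^l_{L⃗} ψ(ξ) = Σ_{J ⊆ [l]} (−1)^{l−|J|} ψ(ξ_{(−∞,L_*)} + Σ_{j∈J} δ_{L_j})`,
w.r.t. the total order on particles pulled back from `ℝ` via the Borel isomorphism `e`. -/
def diffOp (e : Particle d ≃ᵐ ℝ) {l : ℕ} (L : Fin l → Particle d)
    (ψ : Config d → ℝ) (ξ : Config d) : ℝ :=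
  ∑ J : Finset (Fin l), (-1 : ℝ) ^ (l - J.card) *
    ψ (ξ.restrict {M | e M < ⨅ i, e (L i)} + ∑ j ∈ J, Measure.dirac (L j))

/-- `ψ^!_{k_1,…,k_p}(K⃗; ξ) = Π_{i=1}^p T(K_i, ξ + Σ_j δ_{K_j})^{k_i}`. -/
def psiBang {k : ℕ} [NeZero k] (A : AdmissibleFun d k) {p : ℕ}
    (K : Fin p → Particle d) (kk : Fin p → ℕ) (ξ : Config d) : ℝ :=
  ∏ i, score A (K i) (ξ + ∑ j, Measure.dirac (K j)) ^ (kk i)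

/-- The translation `θ_x ξ` of a configuration. -/
def shiftConfig (x : EuclidPt d) (ξ : Config d) : Config d :=
  ξ.map fun K => translate K x

/-- The symmetric difference `ξ △ ξ' = max(ξ,ξ') − min(ξ,ξ')` of two configurations. -/
def symmDiffM (ξ ξ' : Config d) : Config d := (ξ ⊔ ξ') - (ξ ⊓ ξ')

/-- A dissection system: nested countable measurable partitions separating points. -/
def IsDissection (d : ℕ) (Ψ : ℕ → ℕ → Set (Particle d)) : Prop :=
  (∀ n j, MeasurableSet (Ψ n j)) ∧
  (∀ n, ∀ K : Particle d, ∃! j, K ∈ Ψ n j) ∧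
  (∀ n j, ∃ j', Ψ (n + 1) j ⊆ Ψ n j') ∧
  (∀ K L : Particle d, K ≠ L → ∃ n, ∀ j, ¬(K ∈ Ψ n j ∧ L ∈ Ψ n j))

/-- `m_{(1)}(K) = E_K[T(K,Ξ)] ρ_1(K)`. -/
def m1Fun {k : ℕ} [NeZero k] (A : AdmissibleFun d k) (ρ₁ : Particle d → ℝ)
    (P₁ : Particle d → Measure (Config d)) (K : Particle d) : ℝ :=
  ρ₁ K * ∫ ξ, score A K ξ ∂(P₁ K)

/-- `m_{(1,2)}(K) = E_K[T(K,Ξ)^2] ρ_1(K)`. -/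
def m12Fun {k : ℕ} [NeZero k] (A : AdmissibleFun d k) (ρ₁ : Particle d → ℝ)
    (P₁ : Particle d → Measure (Config d)) (K : Particle d) : ℝ :=
  ρ₁ K * ∫ ξ, (score A K ξ) ^ 2 ∂(P₁ K)

/-- `m_{(2)}(K,L) = E_{K,L}[T(K,Ξ) T(L,Ξ)] ρ_2(K,L)`. -/
def m2Fun {k : ℕ} [NeZero k] (A : AdmissibleFun d k) (ρ₂ : Particle d → Particle d → ℝ)
    (P₂ : Particle d → Particle d → Measure (Config d)) (K L : Particle d) : ℝ :=
  ρ₂ K L * ∫ ξ, score A K ξ * score A L ξ ∂(P₂ K L)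

/-- The mean `E[F_h(Ξ_n)]`. -/
def meanF {k : ℕ} [NeZero k] (A : AdmissibleFun d k) (P : Measure (Config d)) (n : ℕ) : ℝ :=
  ∫ ξ, Ustat A (restrictWin n ξ) ∂P

/-- The variance `var(F_h(Ξ_n))`. -/
def varF {k : ℕ} [NeZero k] (A : AdmissibleFun d k) (P : Measure (Config d)) (n : ℕ) : ℝ :=
  (∫ ξ, (Ustat A (restrictWin n ξ)) ^ 2 ∂P) - (meanF A P n) ^ 2

end GibbsParticle

open GibbsParticle

section AuxDiffOp

open Set

/-- Auxiliary: on the set of tuples avoiding `M`, the product measure of `ξ + δ_M`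
agrees with that of `ξ`. Proven directly from the outer-measure definition of
`Measure.pi` (no σ-finiteness needed). -/
lemma pi_restrict_add_dirac_aux {α : Type*} [MeasurableSpace α] {n : ℕ}
    (ξ : Measure α) (M : α) (hM : MeasurableSet ({M} : Set α)) :
    (Measure.pi fun _ : Fin n => ξ + Measure.dirac M).restrict
        (Set.pi Set.univ fun _ : Fin n => ({M}ᶜ : Set α))
      = (Measure.pi fun _ : Fin n => ξ).restrict
        (Set.pi Set.univ fun _ : Fin n => ({M}ᶜ : Set α)) := by
  set S : Set (Fin n → α) := Set.pi Set.univ fun _ : Fin n => ({M}ᶜ : Set α) with hSdef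
  have hS : MeasurableSet S := MeasurableSet.univ_pi fun _ => hM.compl
  set ξ' : Measure α := ξ + Measure.dirac M with hxi'
  -- monotonicity: pi ξ ≤ pi ξ' as outer measures
  have hpi_eq : ∀ m : Fin n → OuterMeasure α,
      OuterMeasure.pi m = OuterMeasure.boundedBy (piPremeasure m) := fun _ => rfl
  have hmono : OuterMeasure.pi (fun _ : Fin n => ξ.toOuterMeasure)
      ≤ OuterMeasure.pi (fun _ : Fin n => ξ'.toOuterMeasure) := by
    rw [hpi_eq (fun _ : Fin n => ξ'.toOuterMeasure), OuterMeasure.le_boundedBy]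
    intro s
    refine le_trans (MeasureTheory.OuterMeasure.boundedBy_le (m := piPremeasure
      (fun _ : Fin n => ξ.toOuterMeasure)) s) ?_
    unfold piPremeasure
    refine Finset.prod_le_prod' fun i _ => ?_
    simp only [Measure.coe_toOuterMeasure, hxi', Measure.coe_add, Pi.add_apply]
    exact le_self_add
  -- the reverse inequality inside `S`
  have hkey : ∀ v : Set (Fin n → α),
      OuterMeasure.pi (fun _ : Fin n => ξ'.toOuterMeasure) (v ∩ S)
        ≤ piPremeasure (fun _ : Fin n => ξ.toOuterMeasure) v := by
    intro v
    have hsub : v ∩ S ⊆ Set.pi Set.univ fun i => (Function.eval i '' v) \ {M} := by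
      rintro g ⟨hgv, hgS⟩ i _
      exact ⟨⟨g, hgv, rfl⟩, hgS i (Set.mem_univ i)⟩
    calc OuterMeasure.pi (fun _ : Fin n => ξ'.toOuterMeasure) (v ∩ S)
        ≤ OuterMeasure.pi (fun _ : Fin n => ξ'.toOuterMeasure)
            (Set.pi Set.univ fun i => (Function.eval i '' v) \ {M}) :=
          (OuterMeasure.pi _).mono hsub
      _ ≤ ∏ i : Fin n, ξ'.toOuterMeasure ((Function.eval i '' v) \ {M}) :=
          MeasureTheory.OuterMeasure.pi_pi_le _ _
      _ ≤ ∏ i : Fin n, ξ.toOuterMeasure (Function.eval i '' v) := by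
          refine Finset.prod_le_prod' fun i _ => ?_
          have hdirac : Measure.dirac M ((Function.eval i '' v) \ {M}) = 0 := by
            refine measure_mono_null (Set.diff_subset_compl _ _) ?_
            rw [Measure.dirac_apply' M hM.compl]
            simp
          simp only [Measure.coe_toOuterMeasure, hxi', Measure.coe_add, Pi.add_apply, hdirac,
            add_zero]
          exact measure_mono Set.diff_subset
      _ = piPremeasure (fun _ : Fin n => ξ.toOuterMeasure) v := rfl
  have hrestr : OuterMeasure.restrict S
      (OuterMeasure.pi (fun _ : Fin n => ξ'.toOuterMeasure))
        ≤ OuterMeasure.pi (fun _ : Fin n => ξ.toOuterMeasure) := by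
    rw [hpi_eq (fun _ : Fin n => ξ.toOuterMeasure), OuterMeasure.le_boundedBy]
    intro v
    rw [OuterMeasure.restrict_apply]
    exact hkey v
  refine Measure.ext fun t ht => ?_
  rw [Measure.restrict_apply ht, Measure.restrict_apply ht]
  have hu : MeasurableSet (t ∩ S) := ht.inter hS
  rw [Measure.pi_def, Measure.pi_def, toMeasure_apply _ _ hu, toMeasure_apply _ _ hu]
  refine le_antisymm ?_ (hmono _)
  have := hrestr (t ∩ S)
  rwa [OuterMeasure.restrict_apply, Set.inter_assoc, Set.inter_self] at this

/-- Integrals against the factorial measure are unchanged by adding `δ_M`, provided the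
integrand vanishes on all tuples containing `M`. -/
lemma integral_factorialMeasure_add_dirac {d n : ℕ} (ξ : Config d) (M : Particle d)
    (f : (Fin n → Particle d) → ℝ) (hf : ∀ g : Fin n → Particle d, (∃ i, g i = M) → f g = 0) :
    ∫ g, f g ∂(factorialMeasure n (ξ + Measure.dirac M))
      = ∫ g, f g ∂(factorialMeasure n ξ) := by
  have hM : MeasurableSet ({M} : Set (Particle d)) := measurableSet_singleton M
  set S : Set (Fin n → Particle d) := Set.pi Set.univ fun _ : Fin n => ({M}ᶜ) with hSdef
  have hS : MeasurableSet S := MeasurableSet.univ_pi fun _ => hM.compl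
  have hind : ∀ g, f g = S.indicator f g := by
    intro g
    by_cases hg : g ∈ S
    · rw [Set.indicator_of_mem hg]
    · rw [Set.indicator_of_notMem hg]
      refine hf g ?_
      simp only [hSdef, Set.mem_pi, Set.mem_univ, Set.mem_compl_iff, Set.mem_singleton_iff,
        forall_true_left, not_forall, not_not] at hg
      exact hg
  have hrestr : ∀ ν : Config d, (factorialMeasure n ν).restrict S
      = (((Measure.pi fun _ : Fin n => ν).restrict S).restrict
          {g : Fin n → Particle d | Function.Injective g}) := by
    intro ν
    rw [factorialMeasure, Measure.restrict_restrict hS, Measure.restrict_restrict' hS,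
      Set.inter_comm]
  calc ∫ g, f g ∂(factorialMeasure n (ξ + Measure.dirac M))
      = ∫ g, S.indicator f g ∂(factorialMeasure n (ξ + Measure.dirac M)) := by
        simp_rw [← hind]
    _ = ∫ g in S, f g ∂(factorialMeasure n (ξ + Measure.dirac M)) :=
        MeasureTheory.integral_indicator hS
    _ = ∫ g in S, f g ∂(factorialMeasure n ξ) := by
        rw [hrestr, hrestr, pi_restrict_add_dirac_aux ξ M hM]
    _ = ∫ g, S.indicator f g ∂(factorialMeasure n ξ) :=
        (MeasureTheory.integral_indicator hS).symm
    _ = ∫ g, f g ∂(factorialMeasure n ξ) := by simp_rw [← hind]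

/-- The score is unchanged by adding a far-away particle. -/
lemma score_add_dirac_far {d k : ℕ} [NeZero k] (A : AdmissibleFun d k)
    (K₀ M : Particle d) (hfar : A.r < dist M K₀) (ξ : Config d) :
    score A K₀ (ξ + Measure.dirac M) = score A K₀ ξ := by
  unfold score
  congr 1
  refine integral_factorialMeasure_add_dirac ξ M _ ?_
  rintro g ⟨i, hi⟩
  have hk : k - 1 + 1 = k := Nat.succ_pred_eq_of_pos (Nat.pos_of_ne_zero (NeZero.ne k))
  set j : Fin k := Fin.cast hk i.succ with hj
  have hzero : Fin.cast hk.symm (0 : Fin k) = (0 : Fin (k - 1 + 1)) := by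
    apply Fin.ext; simp
  have hcons0 : consP K₀ g 0 = K₀ := by
    rw [consP, hzero, Fin.cons_zero]
  have hconsj : consP K₀ g j = M := by
    have hcast : Fin.cast hk.symm j = i.succ := by apply Fin.ext; simp [hj]
    rw [consP, hcast, Fin.cons_succ, hi]
  refine A.vanish_far _ ⟨j, ?_, ?_⟩
  · intro h0
    have : (0 : ℕ) = i.val + 1 := by
      have := congrArg Fin.val h0
      simpa [hj] using this.symm
    omega
  · rw [hconsj, hcons0]; exact hfar

/-- `ψ^!` is unchanged by adding a particle far from all the `K i`. -/
lemma psiBang_add_dirac_far {d k : ℕ} [NeZero k] (A : AdmissibleFun d k) {p : ℕ}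
    (K : Fin p → Particle d) (kk : Fin p → ℕ) (M : Particle d)
    (hfar : ∀ i, A.r < dist M (K i)) (η : Config d) :
    psiBang A K kk (η + Measure.dirac M) = psiBang A K kk η := by
  unfold psiBang
  refine Finset.prod_congr rfl fun i _ => ?_
  have hcomm : η + Measure.dirac M + ∑ j, Measure.dirac (K j)
      = (η + ∑ j, Measure.dirac (K j)) + Measure.dirac M := by
    rw [add_right_comm]
  rw [hcomm, score_add_dirac_far A (K i) M (hfar i)]

end AuxDiffOp

/-- The difference operator applied to `ψ^!` vanishes as soon as one of
the particles `L_m` lies outside `∪_{i=1}^p B(K_i, 2r)` (balls in the Hausdorff metric). -/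
theorem diffOp_vanishes_far {d k : ℕ} [NeZero k] (G : AdmissibleGibbs d)
    (hsub : G.lam < percThreshold d G.law.Q) (A : AdmissibleFun d k)
    (e : Particle d ≃ᵐ ℝ)
    (p : ℕ) (hp : 1 ≤ p) (kk : Fin p → ℕ) (hkk : ∀ i, 1 ≤ kk i)
    (K : Fin p → Particle d)
    (l : ℕ) (hl : 1 ≤ l) (L : Fin l → Particle d)
    (hm : ∃ m : Fin l, L m ∉ ⋃ i, Metric.closedBall (K i) (2 * A.r)) :
    ∀ ξ : Config d, diffOp e L (psiBang A K kk) ξ = 0 := by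
  obtain ⟨m, hm⟩ := hm
  have hfar : ∀ i, A.r < dist (L m) (K i) := by
    intro i
    have h2 : 2 * A.r < dist (L m) (K i) := by
      by_contra h
      push_neg at h
      exact hm (Set.mem_iUnion.2 ⟨i, Metric.mem_closedBall.2 h⟩)
    nlinarith [A.r_pos]
  intro ξ
  rw [diffOp]
  set ξ₀ : Config d := ξ.restrict {M | e M < ⨅ i, e (L i)} with hxi0
  set f : Finset (Fin l) → ℝ := fun J => (-1 : ℝ) ^ (l - J.card) *
    psiBang A K kk (ξ₀ + ∑ j ∈ J, Measure.dirac (L j)) with hf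
  have key : ∀ J : Finset (Fin l), m ∉ J → f J + f (insert m J) = 0 := by
    intro J hmJ
    have hψ : psiBang A K kk (ξ₀ + ∑ j ∈ insert m J, Measure.dirac (L j))
        = psiBang A K kk (ξ₀ + ∑ j ∈ J, Measure.dirac (L j)) := by
      rw [Finset.sum_insert hmJ,
        show ξ₀ + (Measure.dirac (L m) + ∑ j ∈ J, Measure.dirac (L j))
          = (ξ₀ + ∑ j ∈ J, Measure.dirac (L j)) + Measure.dirac (L m) by
            rw [← add_assoc, add_right_comm]]
      exact psiBang_add_dirac_far A K kk (L m) hfar _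
    have hcardlt : J.card < l := by
      have hne : J ≠ Finset.univ := by
        intro h
        exact hmJ (h ▸ Finset.mem_univ m)
      have := Finset.card_lt_card ((Finset.subset_univ J).ssubset_of_ne hne)
      simpa using this
    have hcard : (insert m J).card = J.card + 1 := Finset.card_insert_of_notMem hmJ
    have hsub : l - J.card = (l - (J.card + 1)) + 1 := by omega
    rw [hf]
    simp only [hψ, hcard, hsub, pow_succ]
    ring
  refine Finset.sum_ninvolution
    (fun J => if m ∈ J then J.erase m else insert m J) ?_ ?_ (fun J => Finset.mem_univ _) ?_
  · intro J
    by_cases hmJ : m ∈ J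
    · simp only [hmJ, if_true]
      have h1 : J = insert m (J.erase m) := (Finset.insert_erase hmJ).symm
      have h2 := key (J.erase m) (Finset.notMem_erase m J)
      calc f J + f (J.erase m) = f (J.erase m) + f (insert m (J.erase m)) := by
            rw [← h1]; ring
        _ = 0 := h2
    · simp only [hmJ, if_false]
      exact key J hmJ
  · intro J _
    by_cases hmJ : m ∈ J
    · simp only [hmJ, if_true]
      intro h
      have hmJ' := hmJ
      rw [← h] at hmJ'
      exact Finset.notMem_erase m J hmJ'
    · simp only [hmJ, if_false]
      intro h
      exact hmJ (by rw [← h]; exact Finset.mem_insert_self m J)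
  · intro J
    by_cases hmJ : m ∈ J
    · simp [hmJ, Finset.notMem_erase, Finset.insert_erase hmJ]
    · simp [hmJ, Finset.erase_insert hmJ]
end
end

section
/- Let (Ξ, T) be an admissible pair with F_h of order k, let k_1,…,k_p ∈ ℕ, t_p := Σ_{i=1}^p k_i, and K_1,…,K_p ∈ C^(d). Then for all l ∈ ℕ, L_1,…,L_l ∈ C^(d) and ξ ∈ N: |D^l_{L_1,…,L_l} ψ^!_{k_1,…,k_p}(K_1,…,K_p; ξ)| ≤ ‖h‖_∞^{t_p} · 2^l · (ξ(∪_{i=1}^p B(K_i, 2r)) + l + p)^{t_p(k−1)}, where B(K, 2r) is the ball of radius 2r around K in the Hausdorff metric. -/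
open MeasureTheory Metric Filter Topology
open scoped ENNReal NNReal Classical

noncomputable section

open GibbsParticle


section Aux

variable {d : ℕ}

instance : Nonempty (Particle d) :=
  ⟨⟨⟨{0}, isCompact_singleton⟩, Set.singleton_nonempty 0⟩⟩

lemma abs_h_le_hNorm {k : ℕ} [NeZero k] (A : AdmissibleFun d k) (K : Fin k → Particle d) :
    |A.h K| ≤ hNorm A := by
  obtain ⟨M, hM⟩ := A.bdd
  exact le_ciSup ⟨M, by rintro x ⟨K', rfl⟩; exact hM K'⟩ K

lemma measure_pi_apply_le {ι : Type*} [Fintype ι] {α : ι → Type*} [∀ i, MeasurableSpace (α i)]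
    (μ : ∀ i, Measure (α i)) (s : ∀ i, Set (α i)) (hs : ∀ i, MeasurableSet (s i)) :
    Measure.pi μ (Set.pi Set.univ s) ≤ ∏ i, μ i (s i) := by
  rw [Measure.pi_def, MeasureTheory.toMeasure_apply _ _
    (MeasurableSet.pi Set.countable_univ fun i _ => hs i)]
  exact MeasureTheory.OuterMeasure.pi_pi_le _ _

lemma score_ofReal_abs_le {k : ℕ} [NeZero k] (A : AdmissibleFun d k) (K : Particle d)
    (η : Config d) :
    ENNReal.ofReal |score A K η| ≤
      ENNReal.ofReal (hNorm A) * η (Metric.closedBall K A.r) ^ (k - 1) := by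
  classical
  set ν := factorialMeasure (k - 1) η with hν
  set S : Set (Fin (k - 1) → Particle d) :=
    Set.univ.pi fun _ => Metric.closedBall K A.r with hSdef
  have hSmeas : MeasurableSet S :=
    MeasurableSet.pi Set.countable_univ fun _ _ => measurableSet_closedBall
  have hk : k - 1 + 1 = k := Nat.succ_pred_eq_of_pos (Nat.pos_of_ne_zero (NeZero.ne k))
  have h1 : ENNReal.ofReal |score A K η| ≤
      ∫⁻ L, ENNReal.ofReal |A.h (consP K L)| ∂ν := by
    have hfac : |score A K η| ≤ |∫ L, A.h (consP K L) ∂ν| := by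
      rw [score, abs_mul, abs_inv, Nat.abs_cast]
      refine mul_le_of_le_one_left (abs_nonneg _) ?_
      exact inv_le_one_of_one_le₀ (Nat.one_le_cast.2 k.factorial_pos)
    calc ENNReal.ofReal |score A K η|
        ≤ ENNReal.ofReal ‖∫ L, A.h (consP K L) ∂ν‖ := by
          rw [Real.norm_eq_abs]; exact ENNReal.ofReal_le_ofReal hfac
      _ ≤ ENNReal.ofReal (∫⁻ L, ENNReal.ofReal ‖A.h (consP K L)‖ ∂ν).toReal :=
          ENNReal.ofReal_le_ofReal (norm_integral_le_lintegral_norm _)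
      _ ≤ ∫⁻ L, ENNReal.ofReal ‖A.h (consP K L)‖ ∂ν := ENNReal.ofReal_toReal_le
      _ = ∫⁻ L, ENNReal.ofReal |A.h (consP K L)| ∂ν := by simp [Real.norm_eq_abs]
  have h2 : ∀ L, ENNReal.ofReal |A.h (consP K L)| ≤
      S.indicator (fun _ => ENNReal.ofReal (hNorm A)) L := by
    intro L
    by_cases hL : L ∈ S
    · rw [Set.indicator_of_mem hL]
      exact ENNReal.ofReal_le_ofReal (abs_h_le_hNorm A _)
    · rw [Set.indicator_of_notMem hL]
      have hex : ∃ j, ¬ L j ∈ Metric.closedBall K A.r := by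
        by_contra hcon
        push_neg at hcon
        exact hL fun j _ => hcon j
      obtain ⟨j, hj⟩ := hex
      have hj' : A.r < dist (L j) K := by
        rw [Metric.mem_closedBall] at hj; linarith [not_le.1 hj]
      have e1 : consP K L (Fin.cast hk j.succ) = L j := by
        rw [consP]
        have : (Fin.cast hk.symm (Fin.cast hk j.succ)) = j.succ := by
          apply Fin.ext; simp
        rw [this, Fin.cons_succ]
      have e0 : consP K L (0 : Fin k) = K := by
        rw [consP]
        have : (Fin.cast hk.symm (0 : Fin k)) = 0 := by apply Fin.ext; simp
        rw [this, Fin.cons_zero]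
      have hvan : A.h (consP K L) = 0 := by
        apply A.vanish_far
        refine ⟨Fin.cast hk j.succ, ?_, ?_⟩
        · apply Fin.ne_of_val_ne; simp
        · rw [e1, e0]; exact hj'
      simp [hvan]
  have h3 : ∫⁻ L, S.indicator (fun _ => ENNReal.ofReal (hNorm A)) L ∂ν
      = ENNReal.ofReal (hNorm A) * ν S := lintegral_indicator_const hSmeas _
  have h4 : ν S ≤ η (Metric.closedBall K A.r) ^ (k - 1) := by
    calc ν S ≤ Measure.pi (fun _ : Fin (k - 1) => η) S := Measure.restrict_apply_le _ _
      _ ≤ ∏ _i : Fin (k - 1), η (Metric.closedBall K A.r) :=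
          measure_pi_apply_le _ _ fun _ => measurableSet_closedBall
      _ = η (Metric.closedBall K A.r) ^ (k - 1) := by
          rw [Finset.prod_const, Finset.card_univ, Fintype.card_fin]
  calc ENNReal.ofReal |score A K η| ≤ ∫⁻ L, ENNReal.ofReal |A.h (consP K L)| ∂ν := h1
    _ ≤ ∫⁻ L, S.indicator (fun _ => ENNReal.ofReal (hNorm A)) L ∂ν := lintegral_mono h2
    _ = ENNReal.ofReal (hNorm A) * ν S := h3
    _ ≤ ENNReal.ofReal (hNorm A) * η (Metric.closedBall K A.r) ^ (k - 1) :=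
        mul_le_mul_right h4 _

end Aux

/-- The bound
`|D^l_{L⃗} ψ^!(K⃗; ξ)| ≤ ‖h‖_∞^{t_p} 2^l (ξ(∪_i B(K_i, 2r)) + l + p)^{t_p(k−1)}`
with `t_p = Σᵢ kᵢ`, balls in the Hausdorff metric. -/
theorem diffOp_bound {d k : ℕ} [NeZero k] (G : AdmissibleGibbs d)
    (hsub : G.lam < percThreshold d G.law.Q) (A : AdmissibleFun d k)
    (e : Particle d ≃ᵐ ℝ)
    (p : ℕ) (hp : 1 ≤ p) (kk : Fin p → ℕ) (hkk : ∀ i, 1 ≤ kk i)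
    (K : Fin p → Particle d)
    (l : ℕ) (hl : 1 ≤ l) (L : Fin l → Particle d) (ξ : Config d) :
    ENNReal.ofReal |diffOp e L (psiBang A K kk) ξ|
      ≤ ENNReal.ofReal (hNorm A) ^ (∑ i, kk i) * 2 ^ l *
          (ξ (⋃ i, Metric.closedBall (K i) (2 * A.r)) + l + p) ^ ((∑ i, kk i) * (k - 1)) := by
  classical
  set t := ∑ i, kk i with ht
  set S : ℝ≥0∞ := ξ (⋃ i, Metric.closedBall (K i) (2 * A.r)) + l + p with hS
  have hball : ∀ (i : Fin p) (η : Config d),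
      η ≤ ξ → (η + ∑ j ∈ (Finset.univ : Finset (Fin l)).filter (· ∈ (∅ : Finset (Fin l))),
        Measure.dirac (L j)) = η → True := fun _ _ _ _ => trivial
  -- bound each term of the difference operator
  have key : ∀ J : Finset (Fin l),
      ENNReal.ofReal |psiBang A K kk
          (ξ.restrict {M | e M < ⨅ i, e (L i)} + ∑ j ∈ J, Measure.dirac (L j))|
        ≤ ENNReal.ofReal (hNorm A) ^ t * S ^ (t * (k - 1)) := by
    intro J
    set η' : Config d := ξ.restrict {M | e M < ⨅ i, e (L i)} + ∑ j ∈ J, Measure.dirac (L j)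
      + ∑ j, Measure.dirac (K j) with hη'
    have hmeas_ball : ∀ i : Fin p, η' (Metric.closedBall (K i) A.r) ≤ S := by
      intro i
      have hsub : Metric.closedBall (K i) A.r ⊆ ⋃ i', Metric.closedBall (K i') (2 * A.r) :=
        (Metric.closedBall_subset_closedBall (by linarith [A.r_pos.le])).trans
          (Set.subset_iUnion (fun i' => Metric.closedBall (K i') (2 * A.r)) i)
      have h₁ : (ξ.restrict {M | e M < ⨅ i, e (L i)}) (Metric.closedBall (K i) A.r)
          ≤ ξ (⋃ i', Metric.closedBall (K i') (2 * A.r)) :=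
        (Measure.restrict_apply_le _ _).trans (measure_mono hsub)
      have h₂ : (∑ j ∈ J, Measure.dirac (L j)) (Metric.closedBall (K i) A.r) ≤ (l : ℝ≥0∞) := by
        rw [Measure.finset_sum_apply]
        calc ∑ j ∈ J, Measure.dirac (L j) (Metric.closedBall (K i) A.r)
            ≤ ∑ _j ∈ J, (1 : ℝ≥0∞) := Finset.sum_le_sum fun j _ => prob_le_one
          _ = (J.card : ℝ≥0∞) := by simp
          _ ≤ (l : ℝ≥0∞) := by
              exact_mod_cast Nat.cast_le.2 ((J.card_le_univ).trans_eq (by simp))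
      have h₃ : (∑ j, Measure.dirac (K j)) (Metric.closedBall (K i) A.r) ≤ (p : ℝ≥0∞) := by
        rw [Measure.finset_sum_apply]
        calc ∑ j : Fin p, Measure.dirac (K j) (Metric.closedBall (K i) A.r)
            ≤ ∑ _j : Fin p, (1 : ℝ≥0∞) := Finset.sum_le_sum fun j _ => prob_le_one
          _ = (p : ℝ≥0∞) := by simp
      calc η' (Metric.closedBall (K i) A.r)
          = (ξ.restrict {M | e M < ⨅ i, e (L i)}) (Metric.closedBall (K i) A.r)
            + (∑ j ∈ J, Measure.dirac (L j)) (Metric.closedBall (K i) A.r)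
            + (∑ j, Measure.dirac (K j)) (Metric.closedBall (K i) A.r) := by
            rw [hη', Measure.add_apply, Measure.add_apply]
        _ ≤ S := by rw [hS]; gcongr
    have hsum : (∑ j, Measure.dirac (K j) : Config d) = ∑ j, Measure.dirac (K j) := rfl
    have hpsi : ENNReal.ofReal |psiBang A K kk
        (ξ.restrict {M | e M < ⨅ i, e (L i)} + ∑ j ∈ J, Measure.dirac (L j))|
        = ∏ i, (ENNReal.ofReal |score A (K i) η'|) ^ kk i := by
      rw [psiBang]
      have : (ξ.restrict {M | e M < ⨅ i, e (L i)} + ∑ j ∈ J, Measure.dirac (L j))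
          + ∑ j, Measure.dirac (K j) = η' := by rw [hη']
      rw [this, Finset.abs_prod, ENNReal.ofReal_prod_of_nonneg
        (fun i _ => abs_nonneg _)]
      refine Finset.prod_congr rfl fun i _ => ?_
      rw [abs_pow, ENNReal.ofReal_pow (abs_nonneg _)]
    rw [hpsi]
    calc ∏ i, (ENNReal.ofReal |score A (K i) η'|) ^ kk i
        ≤ ∏ i, (ENNReal.ofReal (hNorm A) * S ^ (k - 1)) ^ kk i := by
          refine Finset.prod_le_prod' fun i _ => pow_le_pow_left' ?_ _
          refine (score_ofReal_abs_le A (K i) η').trans ?_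
          exact mul_le_mul_right (pow_le_pow_left' (hmeas_ball i) _) _
      _ = ENNReal.ofReal (hNorm A) ^ t * S ^ (t * (k - 1)) := by
          simp_rw [mul_pow]
          rw [Finset.prod_mul_distrib, Finset.prod_pow_eq_pow_sum,
            Finset.prod_pow_eq_pow_sum, ← pow_mul, ← ht, mul_comm (k-1) t]
  -- sum up
  have habs : |diffOp e L (psiBang A K kk) ξ| ≤
      ∑ J : Finset (Fin l), |psiBang A K kk
        (ξ.restrict {M | e M < ⨅ i, e (L i)} + ∑ j ∈ J, Measure.dirac (L j))| := by
    rw [diffOp]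
    refine (Finset.abs_sum_le_sum_abs _ _).trans (le_of_eq ?_)
    refine Finset.sum_congr rfl fun J _ => ?_
    rw [abs_mul, abs_pow, abs_neg, abs_one, one_pow, one_mul]
  calc ENNReal.ofReal |diffOp e L (psiBang A K kk) ξ|
      ≤ ENNReal.ofReal (∑ J : Finset (Fin l), |psiBang A K kk
          (ξ.restrict {M | e M < ⨅ i, e (L i)} + ∑ j ∈ J, Measure.dirac (L j))|) :=
        ENNReal.ofReal_le_ofReal habs
    _ = ∑ J : Finset (Fin l), ENNReal.ofReal |psiBang A K kk
          (ξ.restrict {M | e M < ⨅ i, e (L i)} + ∑ j ∈ J, Measure.dirac (L j))| :=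
        ENNReal.ofReal_sum_of_nonneg fun J _ => abs_nonneg _
    _ ≤ ∑ _J : Finset (Fin l), ENNReal.ofReal (hNorm A) ^ t * S ^ (t * (k - 1)) :=
        Finset.sum_le_sum fun J _ => key J
    _ = (2 : ℝ≥0∞) ^ l * (ENNReal.ofReal (hNorm A) ^ t * S ^ (t * (k - 1))) := by
        rw [Finset.sum_const, Finset.card_univ, Fintype.card_finset, Fintype.card_fin,
          nsmul_eq_mul]
        norm_cast
    _ = ENNReal.ofReal (hNorm A) ^ t * 2 ^ l * S ^ (t * (k - 1)) := by ring
end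
end
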